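/- Let M be an oriented n-dimensional manifold and let ∇ and ∇̄ be projectively equivalent torsion-free affine connections on M. Then: (1) for every vector field v of projective weight 1 (section of T^{(1,0)}M ⊗ (Λ_n)^{1/(n+1)}M), the trace-free part of its covariant derivative, v^i_{,j} − (1/n) v^s_{,s} δ^i_j, is the same for ∇ and ∇̄; and (2) for every symmetric (2,0)-tensor σ of projective weight 2 (section of the symmetric part of T^{(2,0)}M ⊗ (Λ_n)^{2/(n+1)}M), the expression σ^{ij}_{,k} − (1/(n+1))(σ^{is}_{,s} δ^j_k + σ^{js}_{,s} δ^i_k) is the same for ∇ and ∇̄. -/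

import Mathlib

open scoped ContDiff

noncomputable section

namespace ProjGeo

/-- The partial derivative of a function on `ℝⁿ` in the `j`-th coordinate direction. -/
def pd {n : ℕ} (j : Fin n) (f : (Fin n → ℝ) → ℝ) (p : Fin n → ℝ) : ℝ :=
  fderiv ℝ f p (Pi.single j 1)

/-- Christoffel symbols in coordinates: `Γ p i j k` represents `Γ^i_{jk}` at the point `p`. -/
abbrev Christoffel (n : ℕ) := (Fin n → ℝ) → Fin n → Fin n → Fin n → ℝ

/-- A connection is torsion-free (symmetric) if `Γ^i_{jk} = Γ^i_{kj}`. -/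
def TorsionFree {n : ℕ} (Γ : Christoffel n) : Prop :=
  ∀ p i j k, Γ p i j k = Γ p i k j

/-- Smoothness of the Christoffel symbols on the open set `U`. -/
def SmoothChristoffelOn {n : ℕ} (U : Set (Fin n → ℝ)) (Γ : Christoffel n) : Prop :=
  ∀ i j k, ContDiffOn ℝ ∞ (fun p => Γ p i j k) U

/-- `γ` is a (parameterized) geodesic of the connection `Γ` on the parameter set `I`,
staying inside `U`: it is smooth and satisfies `γ̈^i + Γ^i_{jk} γ̇^j γ̇^k = 0`. -/
def IsGeodesicOn {n : ℕ} (U : Set (Fin n → ℝ)) (Γ : Christoffel n)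
    (γ : ℝ → Fin n → ℝ) (I : Set ℝ) : Prop :=
  (∀ t ∈ I, γ t ∈ U) ∧ (∀ i, ContDiffOn ℝ ∞ (fun t => γ t i) I) ∧
  ∀ t ∈ I, ∀ i,
    deriv (fun s => deriv (fun u => γ u i) s) t
      + ∑ j, ∑ k, Γ (γ t) i j k * deriv (fun u => γ u j) t * deriv (fun u => γ u k) t = 0

/-- `h` is a smooth regular reparameterisation defined on `J` and mapping `J` bijectively
onto `I`. -/
def IsReparam (I J : Set ℝ) (h : ℝ → ℝ) : Prop :=
  ContDiffOn ℝ ∞ h J ∧ (∀ t ∈ J, deriv h t ≠ 0) ∧ Set.BijOn h J I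

/-- Two connections are projectively equivalent on `U`: each geodesic of the one is, after a
suitable reparameterisation, a geodesic of the other, and vice versa. -/
def ProjEquivOn {n : ℕ} (U : Set (Fin n → ℝ)) (Γ Γ' : Christoffel n) : Prop :=
  (∀ γ I, IsOpen I → IsGeodesicOn U Γ γ I →
    ∃ h J, IsOpen J ∧ IsReparam I J h ∧ IsGeodesicOn U Γ' (fun t => γ (h t)) J) ∧
  (∀ γ I, IsOpen I → IsGeodesicOn U Γ' γ I →
    ∃ h J, IsOpen J ∧ IsReparam I J h ∧ IsGeodesicOn U Γ (fun t => γ (h t)) J)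

/-- `Γ'` is obtained from `Γ` by the projective change associated with the 1-form `φ`:
`Γ'^i_{jk} = Γ^i_{jk} + φ_k δ^i_j + φ_j δ^i_k` on `U`. -/
def ProjChange {n : ℕ} (Γ Γ' : Christoffel n) (φ : (Fin n → ℝ) → Fin n → ℝ)
    (U : Set (Fin n → ℝ)) : Prop :=
  ∀ p ∈ U, ∀ i j k, Γ' p i j k =
    Γ p i j k + (if i = j then φ p k else 0) + (if i = k then φ p j else 0)

end ProjGeo

namespace ProjGeo

/-- The covariant derivative `v^i_{,j}` of a `(1,0)`-tensor `v` of projective weight `w`: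
`v^i_{,j} = ∂_j v^i + Γ^i_{sj} v^s − (w/(n+1)) Γ^s_{sj} v^i`. -/
def covVec {n : ℕ} (w : ℝ) (Γ : Christoffel n) (v : (Fin n → ℝ) → Fin n → ℝ)
    (p : Fin n → ℝ) (i j : Fin n) : ℝ :=
  pd j (fun q => v q i) p + ∑ s, Γ p i s j * v p s
    - (w / ((n : ℝ) + 1)) * (∑ s, Γ p s s j) * v p i

/-- The covariant derivative `σ^{ij}_{,k}` of a `(2,0)`-tensor `σ` of projective weight `w`:
`σ^{ij}_{,k} = ∂_k σ^{ij} + Γ^i_{sk} σ^{sj} + Γ^j_{sk} σ^{is} − (w/(n+1)) Γ^s_{sk} σ^{ij}`. -/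
def covVec2 {n : ℕ} (w : ℝ) (Γ : Christoffel n) (σ : (Fin n → ℝ) → Fin n → Fin n → ℝ)
    (p : Fin n → ℝ) (i j k : Fin n) : ℝ :=
  pd k (fun q => σ q i j) p + ∑ s, Γ p i s k * σ p s j + ∑ s, Γ p j s k * σ p i s
    - (w / ((n : ℝ) + 1)) * (∑ s, Γ p s s k) * σ p i j

/-- The trace-free part of the covariant derivative of a weight-2 symmetric `(2,0)`-tensor:
`σ^{ij}_{,k} − (1/(n+1))(σ^{is}_{,s} δ^j_k + σ^{js}_{,s} δ^i_k)`; the metrisability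
operator. -/
def mOp {n : ℕ} (Γ : Christoffel n) (σ : (Fin n → ℝ) → Fin n → Fin n → ℝ)
    (p : Fin n → ℝ) (i j k : Fin n) : ℝ :=
  covVec2 2 Γ σ p i j k - (1 / ((n : ℝ) + 1)) *
    ((∑ s, covVec2 2 Γ σ p i s s) * (if j = k then 1 else 0)
      + (∑ s, covVec2 2 Γ σ p j s s) * (if i = k then 1 else 0))

end ProjGeo

/-!
Geodesics through `p` exist in every direction `ξ`. Reparametrising such a geodesic into a
geodesic of `Γ'` changes its acceleration only along its velocity, so the (symmetric) difference
tensor `Γ' - Γ` maps every `ξ ⊗ ξ` to a multiple of `ξ`; polarisation then forces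
`Γ'^i_{jk} - Γ^i_{jk} = δ^i_j φ_k + δ^i_k φ_j`. Under such a change a covariant derivative of
weight `w` changes by `δ`-terms, which the trace corrections remove, and by `(1 - w) φ_j v^i`
(resp. `(2 - w) φ_k σ^{ij}`), which vanishes at the weights of the theorem.
-/

namespace ProjGeo

open Finset

lemma sum_sum_mul_single_add_single {n : ℕ} (D : Fin n → Fin n → ℝ) (j k : Fin n) (α β : ℝ) :
    ∑ a, ∑ b, D a b * (Pi.single j α + Pi.single k β : Fin n → ℝ) a
        * (Pi.single j α + Pi.single k β : Fin n → ℝ) b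
      = α * α * D j j + α * β * D j k + β * α * D k j + β * β * D k k := by
  simp only [Pi.add_apply, Pi.single_apply, mul_add, add_mul, sum_add_distrib, mul_ite, ite_mul,
    mul_zero, zero_mul, sum_ite_eq', mem_univ, if_true]
  ring

theorem exists_oneForm_of_quadratic_parallel {n : ℕ} (D : Fin n → Fin n → Fin n → ℝ)
    (hD : ∀ i j k, D i j k = D i k j)
    (h : ∀ ξ : Fin n → ℝ, ∃ c : ℝ, ∀ i, ∑ j, ∑ k, D i j k * ξ j * ξ k = c * ξ i) :
    ∃ φ : Fin n → ℝ, ∀ i j k,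
      D i j k = (if i = j then φ k else 0) + (if i = k then φ j else 0) := by
  have hquad : ∀ j k α β, ∃ c : ℝ, ∀ i,
      α * α * D i j j + α * β * D i j k + β * α * D i k j + β * β * D i k k
        = c * ((if i = j then α else 0) + (if i = k then β else 0)) := by
    intro j k α β
    obtain ⟨c, hc⟩ := h (Pi.single j α + Pi.single k β)
    refine ⟨c, fun i => ?_⟩
    rw [← sum_sum_mul_single_add_single, hc]
    simp only [Pi.add_apply, Pi.single_apply]
  have off_diag : ∀ i j, i ≠ j → D i j j = 0 := by
    intro i j hij
    obtain ⟨c, hc⟩ := hquad j j 1 0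
    simpa [hij] using hc i
  have off_support : ∀ i j k, i ≠ j → i ≠ k → D i j k = 0 := by
    intro i j k hij hik
    obtain ⟨c, hc⟩ := hquad j k 1 1
    have := hc i
    simp only [hij, hik, if_false, add_zero, mul_one, one_mul, mul_zero] at this
    linarith [hD i k j, off_diag i j hij, off_diag i k hik]
  -- polarising along `e_j + e_k` and `e_j - e_k` isolates `D j j k`
  have mixed : ∀ j k, j ≠ k → D j j k = D k k k / 2 := by
    intro j k hjk
    obtain ⟨c, hc⟩ := hquad j k 1 1
    obtain ⟨c', hc'⟩ := hquad j k 1 (-1)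
    have h1 := hc j
    have h2 := hc k
    have h3 := hc' j
    have h4 := hc' k
    simp only [hjk, hjk.symm, if_true, if_false] at h1 h2 h3 h4
    linarith [off_diag j k hjk, off_diag k j hjk.symm, hD j k j, hD k k j]
  refine ⟨fun k => D k k k / 2, fun i j k => ?_⟩
  rcases eq_or_ne i j with rfl | hij <;> rcases eq_or_ne i k with rfl | hik
  · simp only [if_true]; ring
  · simp only [if_true, hik, if_false, add_zero]; exact mixed i k hik
  · simp only [if_true, hij, if_false, zero_add]; rw [hD]; exact mixed i j hij
  · simp only [hij, hik, if_false, add_zero]; exact off_support i j k hij hik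

section ProjectiveChange

variable {n : ℕ} {Γ Γ' : Christoffel n} {φ : (Fin n → ℝ) → Fin n → ℝ} {U : Set (Fin n → ℝ)}
  {p : Fin n → ℝ}

lemma ProjChange.sum_mul (hc : ProjChange Γ Γ' φ U) (hp : p ∈ U) (i k : Fin n)
    (x : Fin n → ℝ) :
    ∑ s, Γ' p i s k * x s
      = ∑ s, Γ p i s k * x s + φ p k * x i + (if i = k then ∑ s, φ p s * x s else 0) := by
  simp only [hc p hp, add_mul, sum_add_distrib, ite_mul, zero_mul, sum_ite_eq, mem_univ,
    if_true, sum_ite_irrel, sum_const_zero]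

lemma ProjChange.trace (hc : ProjChange Γ Γ' φ U) (hp : p ∈ U) (k : Fin n) :
    ∑ s, Γ' p s s k = ∑ s, Γ p s s k + ((n : ℝ) + 1) * φ p k := by
  simp only [hc p hp, sum_add_distrib, if_true, sum_const, card_univ, Fintype.card_fin,
    nsmul_eq_mul, sum_ite_eq', mem_univ]
  ring

lemma ProjChange.covVec_eq (hc : ProjChange Γ Γ' φ U) (hp : p ∈ U) (w : ℝ)
    (v : (Fin n → ℝ) → Fin n → ℝ) (i j : Fin n) :
    covVec w Γ' v p i j = covVec w Γ v p i j
      + (if i = j then ∑ s, φ p s * v p s else 0) + (1 - w) * φ p j * v p i := by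
  have : (n : ℝ) + 1 ≠ 0 := by positivity
  simp only [covVec, hc.sum_mul hp, hc.trace hp]
  field_simp
  ring

lemma ProjChange.covVec2_eq (hc : ProjChange Γ Γ' φ U) (hp : p ∈ U) (w : ℝ)
    (σ : (Fin n → ℝ) → Fin n → Fin n → ℝ) (i j k : Fin n) :
    covVec2 w Γ' σ p i j k = covVec2 w Γ σ p i j k
      + (if i = k then ∑ s, φ p s * σ p s j else 0)
      + (if j = k then ∑ s, φ p s * σ p i s else 0) + (2 - w) * φ p k * σ p i j := by
  have : (n : ℝ) + 1 ≠ 0 := by positivity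
  simp only [covVec2, hc.sum_mul hp i k (fun s => σ p s j),
    hc.sum_mul hp j k (σ p i), hc.trace hp]
  field_simp
  ring

lemma ProjChange.traceFree_covVec_one_eq (hc : ProjChange Γ Γ' φ U) (hp : p ∈ U)
    (v : (Fin n → ℝ) → Fin n → ℝ) (i j : Fin n) :
    covVec 1 Γ' v p i j - (1 / (n : ℝ)) * (∑ s, covVec 1 Γ' v p s s) * (if i = j then 1 else 0)
      = covVec 1 Γ v p i j - (1 / (n : ℝ)) * (∑ s, covVec 1 Γ v p s s)
        * (if i = j then 1 else 0) := by
  have : (n : ℝ) ≠ 0 := Nat.cast_ne_zero.2 i.pos.ne'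
  simp only [hc.covVec_eq hp, sub_self, zero_mul, add_zero, sum_add_distrib, if_true, sum_const,
    card_univ, Fintype.card_fin, nsmul_eq_mul]
  split_ifs <;> field_simp <;> ring

lemma ProjChange.mOp_eq (hc : ProjChange Γ Γ' φ U) (hp : p ∈ U)
    (σ : (Fin n → ℝ) → Fin n → Fin n → ℝ) (hσ : ∀ a b, σ p a b = σ p b a) (i j k : Fin n) :
    mOp Γ' σ p i j k = mOp Γ σ p i j k := by
  have : (n : ℝ) + 1 ≠ 0 := by positivity
  have hsymm : ∀ a, ∑ s, φ p s * σ p a s = ∑ s, φ p s * σ p s a := fun a =>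
    sum_congr rfl fun s _ => by rw [hσ]
  have htrace : ∀ a, ∑ s, covVec2 2 Γ' σ p a s s
      = ∑ s, covVec2 2 Γ σ p a s s + ((n : ℝ) + 1) * ∑ s, φ p s * σ p s a := by
    intro a
    simp only [hc.covVec2_eq hp, sub_self, zero_mul, add_zero, sum_add_distrib, sum_ite_eq,
      mem_univ, if_true, sum_const, card_univ, Fintype.card_fin, nsmul_eq_mul, hsymm]
    ring
  rw [mOp, mOp, hc.covVec2_eq hp, htrace, htrace, hsymm]
  split_ifs <;> field_simp <;> ring

end ProjectiveChange

lemma contDiffOn_of_forall_hasDerivAt_comp {E : Type*} [NormedAddCommGroup E] [NormedSpace ℝ E]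
    {F : E → E} {V : Set E} (hF : ContDiffOn ℝ ∞ F V) {y : ℝ → E} {I : Set ℝ} (hI : IsOpen I)
    (hy : ∀ t ∈ I, HasDerivAt y (F (y t)) t) (hmem : ∀ t ∈ I, y t ∈ V) :
    ContDiffOn ℝ ∞ y I := by
  rw [contDiffOn_infty]
  intro m
  induction m with
  | zero =>
    rw [Nat.cast_zero, contDiffOn_zero]
    exact fun t ht => (hy t ht).continuousAt.continuousWithinAt
  | succ m ih =>
    rw [Nat.cast_succ, contDiffOn_succ_iff_deriv_of_isOpen hI]
    refine ⟨fun t ht => (hy t ht).differentiableAt.differentiableWithinAt, by simp, ?_⟩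
    exact ((hF.of_le (by exact_mod_cast le_top)).comp ih hmem).congr fun t ht => (hy t ht).deriv

theorem deriv_deriv_comp {𝕜 : Type*} [NontriviallyNormedField 𝕜] {f g : 𝕜 → 𝕜} {t : 𝕜}
    (hf : ContDiffAt 𝕜 2 f (g t)) (hg : ContDiffAt 𝕜 2 g t) :
    deriv (fun s => deriv (fun u => f (g u)) s) t
      = deriv (deriv f) (g t) * deriv g t ^ 2 + deriv f (g t) * deriv (deriv g) t := by
  have hnear : ∀ᶠ s in nhds t, ContDiffAt 𝕜 2 f (g s) ∧ ContDiffAt 𝕜 2 g s :=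
    (hg.continuousAt.eventually (hf.eventually (by simp))).and (hg.eventually (by simp))
  have hfirst : (fun s => deriv (fun u => f (g u)) s) =ᶠ[nhds t]
      fun s => deriv f (g s) * deriv g s :=
    hnear.mono fun s hs =>
      deriv_comp s (hs.1.differentiableAt two_ne_zero) (hs.2.differentiableAt two_ne_zero)
  have hf' : DifferentiableAt 𝕜 (deriv f) (g t) :=
    (hf.derivWithin (m := 1) (by norm_num)).differentiableAt one_ne_zero
  have hg' : DifferentiableAt 𝕜 (deriv g) t :=
    (hg.derivWithin (m := 1) (by norm_num)).differentiableAt one_ne_zero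
  have hsecond : HasDerivAt (fun s => deriv f (g s) * deriv g s)
      (deriv (deriv f) (g t) * deriv g t * deriv g t + deriv f (g t) * deriv (deriv g) t) t :=
    (hf'.hasDerivAt.comp t (hg.differentiableAt two_ne_zero).hasDerivAt).mul hg'.hasDerivAt
  rw [hfirst.deriv_eq, hsecond.deriv]
  ring

section Geodesics

variable {n : ℕ} {U : Set (Fin n → ℝ)} {Γ : Christoffel n}

def geodesicSpray (Γ : Christoffel n) (y : (Fin n → ℝ) × (Fin n → ℝ)) :
    (Fin n → ℝ) × (Fin n → ℝ) :=
  (y.2, fun i => -∑ j, ∑ k, Γ y.1 i j k * y.2 j * y.2 k)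

lemma contDiffOn_geodesicSpray (hsm : SmoothChristoffelOn U Γ) :
    ContDiffOn ℝ ∞ (geodesicSpray Γ) (U ×ˢ Set.univ) := by
  refine contDiff_snd.contDiffOn.prodMk (contDiffOn_pi.2 fun i => ?_)
  refine (ContDiffOn.sum fun j _ => ContDiffOn.sum fun k _ => ?_).neg
  have hvel : ∀ l : Fin n, ContDiff ℝ ∞ fun y : (Fin n → ℝ) × (Fin n → ℝ) => y.2 l :=
    fun l => (contDiff_apply ℝ ℝ l).comp contDiff_snd
  exact (((hsm i j k).comp contDiff_fst.contDiffOn fun y hy => hy.1).mul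
    (hvel j).contDiffOn).mul (hvel k).contDiffOn

lemma isGeodesicOn_of_hasDerivAt_geodesicSpray (hsm : SmoothChristoffelOn U Γ)
    {y : ℝ → (Fin n → ℝ) × (Fin n → ℝ)} {I : Set ℝ} (hI : IsOpen I)
    (hy : ∀ t ∈ I, HasDerivAt y (geodesicSpray Γ (y t)) t) (hmem : ∀ t ∈ I, (y t).1 ∈ U) :
    IsGeodesicOn U Γ (fun t => (y t).1) I := by
  have hpos : ∀ t ∈ I, ∀ i, HasDerivAt (fun s => (y s).1 i) ((y t).2 i) t := fun t ht =>
    hasDerivAt_pi.1 (hy t ht).fst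
  have hvel : ∀ t ∈ I, ∀ i, HasDerivAt (fun s => (y s).2 i)
      (-∑ j, ∑ k, Γ (y t).1 i j k * (y t).2 j * (y t).2 k) t := fun t ht =>
    hasDerivAt_pi.1 (hy t ht).snd
  have hsmooth : ContDiffOn ℝ ∞ y I :=
    contDiffOn_of_forall_hasDerivAt_comp (contDiffOn_geodesicSpray hsm) hI hy
      fun t ht => ⟨hmem t ht, trivial⟩
  refine ⟨hmem, fun i => ((contDiff_apply ℝ ℝ i).comp contDiff_fst).comp_contDiffOn hsmooth,
    fun t ht i => ?_⟩
  have hacc : deriv (fun s => deriv (fun u => (y u).1 i) s) t = deriv (fun s => (y s).2 i) t :=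
    (Filter.eventuallyEq_of_mem (hI.mem_nhds ht) fun s hs => (hpos s hs i).deriv).deriv_eq
  simp only [hacc, (hvel t ht i).deriv, (hpos t ht _).deriv]
  ring

lemma exists_isGeodesicOn (hU : IsOpen U) (hsm : SmoothChristoffelOn U Γ) {p : Fin n → ℝ}
    (hp : p ∈ U) (ξ : Fin n → ℝ) :
    ∃ (γ : ℝ → Fin n → ℝ) (ε : ℝ), 0 < ε ∧ γ 0 = p ∧
      (∀ i, deriv (fun s => γ s i) 0 = ξ i) ∧ IsGeodesicOn U Γ γ (Set.Ioo (-ε) ε) := by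
  have hV : U ×ˢ Set.univ ∈ nhds (p, ξ) := (hU.prod isOpen_univ).mem_nhds ⟨hp, trivial⟩
  obtain ⟨y, hy0, ε₀, hε₀, hy⟩ :=
    ((contDiffOn_geodesicSpray hsm).contDiffAt hV).of_le (by exact_mod_cast le_top)
      |>.exists_forall_mem_closedBall_exists_eq_forall_mem_Ioo_hasDerivAt₀ 0
  have hnhds : Set.Ioo (0 - ε₀) (0 + ε₀) ∩ y ⁻¹' (U ×ˢ Set.univ) ∈ nhds (0 : ℝ) :=
    Filter.inter_mem (isOpen_Ioo.mem_nhds (by constructor <;> linarith))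
      ((hy 0 (by constructor <;> linarith)).continuousAt.preimage_mem_nhds (hy0 ▸ hV))
  obtain ⟨ε, hε, hball⟩ := Metric.mem_nhds_iff.1 hnhds
  rw [Real.ball_eq_Ioo, zero_sub, zero_add] at hball
  have hI : ∀ t ∈ Set.Ioo (-ε) ε, HasDerivAt y (geodesicSpray Γ (y t)) t :=
    fun t ht => hy t (hball ht).1
  refine ⟨fun t => (y t).1, ε, hε, congrArg Prod.fst hy0, fun i => ?_,
    isGeodesicOn_of_hasDerivAt_geodesicSpray hsm isOpen_Ioo hI fun t ht => (hball ht).2.1⟩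
  rw [(hasDerivAt_pi.1 (hI 0 ⟨by linarith, hε⟩).fst i).deriv]
  simp only [geodesicSpray, hy0]

end Geodesics

section ProjectiveEquivalence

variable {n : ℕ} {U : Set (Fin n → ℝ)} {Γ Γ' : Christoffel n}

lemma sum_sum_mul_mul_mul_const (D : Fin n → Fin n → ℝ) (ξ : Fin n → ℝ) (c : ℝ) :
    ∑ j, ∑ k, D j k * (ξ j * c) * (ξ k * c) = c ^ 2 * ∑ j, ∑ k, D j k * ξ j * ξ k := by
  simp only [mul_sum]
  exact sum_congr rfl fun j _ => sum_congr rfl fun k _ => by ring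

theorem ProjEquivOn.exists_sum_sub_eq_smul (hU : IsOpen U) (hsm : SmoothChristoffelOn U Γ)
    (hproj : ProjEquivOn U Γ Γ') {p : Fin n → ℝ} (hp : p ∈ U) (ξ : Fin n → ℝ) :
    ∃ c : ℝ, ∀ i, ∑ j, ∑ k, (Γ' p i j k - Γ p i j k) * ξ j * ξ k = c * ξ i := by
  obtain ⟨γ, ε, hε, hγ0, hγ'0, hγ⟩ := exists_isGeodesicOn hU hsm hp ξ
  have h0 : (0 : ℝ) ∈ Set.Ioo (-ε) ε := ⟨by linarith, hε⟩
  obtain ⟨h, J, hJ, ⟨hh, hh'ne, hbij⟩, hγh⟩ := hproj.1 γ _ isOpen_Ioo hγ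
  obtain ⟨t₀, ht₀, hht₀⟩ := hbij.surjOn h0
  have h2 : (2 : WithTop ℕ∞) ≤ ∞ := WithTop.coe_le_coe.2 le_top
  have hγ2 : ∀ i, ContDiffAt ℝ 2 (fun u => γ u i) (h t₀) := fun i => by
    rw [hht₀]; exact ((hγ.2.1 i).contDiffAt (isOpen_Ioo.mem_nhds h0)).of_le h2
  have hh2 : ContDiffAt ℝ 2 h t₀ := (hh.contDiffAt (hJ.mem_nhds ht₀)).of_le h2
  have hvel : ∀ j, deriv (fun u => γ (h u) j) t₀ = ξ j * deriv h t₀ := fun j => by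
    have hd : HasDerivAt (fun u => γ (h u) j) (deriv (fun u => γ u j) (h t₀) * deriv h t₀) t₀ :=
      ((hγ2 j).differentiableAt two_ne_zero).hasDerivAt.comp t₀
        (hh2.differentiableAt two_ne_zero).hasDerivAt
    rw [hd.deriv, hht₀, hγ'0]
  have hacc : ∀ i, deriv (fun s => deriv (fun u => γ (h u) i) s) t₀
      = -(∑ j, ∑ k, Γ p i j k * ξ j * ξ k) * deriv h t₀ ^ 2 + ξ i * deriv (deriv h) t₀ := by
    intro i
    have hgeod : deriv (deriv fun u => γ u i) 0 + _ = 0 := hγ.2.2 0 h0 i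
    simp only [hγ0, hγ'0] at hgeod
    rw [deriv_deriv_comp (hγ2 i) hh2, hht₀, hγ'0]
    linear_combination deriv h t₀ ^ 2 * hgeod
  refine ⟨-deriv (deriv h) t₀ / deriv h t₀ ^ 2, fun i => ?_⟩
  have hgeod' := hγh.2.2 t₀ ht₀ i
  simp only [hacc, hvel, hht₀, hγ0, sum_sum_mul_mul_mul_const (Γ' p i)] at hgeod'
  have hc : deriv h t₀ ^ 2 ≠ 0 := pow_ne_zero 2 (hh'ne t₀ ht₀)
  simp only [sub_mul, sum_sub_distrib]
  rw [div_mul_eq_mul_div, eq_div_iff hc]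
  linear_combination hgeod'

theorem ProjEquivOn.exists_projChange (hU : IsOpen U) (hTF : TorsionFree Γ)
    (hTF' : TorsionFree Γ') (hsm : SmoothChristoffelOn U Γ) (hproj : ProjEquivOn U Γ Γ') :
    ∃ φ, ProjChange Γ Γ' φ U := by
  have hpt : ∀ p ∈ U, ∃ φ : Fin n → ℝ, ∀ i j k, Γ' p i j k - Γ p i j k
      = (if i = j then φ k else 0) + (if i = k then φ j else 0) := fun p hp =>
    exists_oneForm_of_quadratic_parallel _ (fun i j k => by rw [hTF, hTF'])
      (hproj.exists_sum_sub_eq_smul hU hsm hp)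
  choose! φ hφ using hpt
  exact ⟨φ, fun p hp i j k => by linarith [hφ p hp i j k]⟩

end ProjectiveEquivalence

theorem statement_6_general {n : ℕ} (U : Set (Fin n → ℝ)) (hU : IsOpen U)
    (Γ Γ' : Christoffel n) (hTF : TorsionFree Γ) (hTF' : TorsionFree Γ')
    (hsm : SmoothChristoffelOn U Γ)
    (hproj : ProjEquivOn U Γ Γ') :
    (∀ v : (Fin n → ℝ) → Fin n → ℝ, (∀ i, ContDiffOn ℝ ∞ (fun p => v p i) U) →
      ∀ p ∈ U, ∀ i j,
        covVec 1 Γ' v p i j - (1 / (n : ℝ)) * (∑ s, covVec 1 Γ' v p s s)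
            * (if i = j then 1 else 0)
          = covVec 1 Γ v p i j - (1 / (n : ℝ)) * (∑ s, covVec 1 Γ v p s s)
            * (if i = j then 1 else 0)) ∧
    (∀ σ : (Fin n → ℝ) → Fin n → Fin n → ℝ,
      (∀ i j, ContDiffOn ℝ ∞ (fun p => σ p i j) U) →
      (∀ p i j, σ p i j = σ p j i) →
      ∀ p ∈ U, ∀ i j k, mOp Γ' σ p i j k = mOp Γ σ p i j k) := by
  obtain ⟨φ, hφ⟩ := hproj.exists_projChange hU hTF hTF' hsm
  exact ⟨fun v _ p hp i j => hφ.traceFree_covVec_one_eq hp v i j,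
    fun σ _ hσ p hp i j k => hφ.mOp_eq hp σ (hσ p) i j k⟩

/-- (1) For `(1,0)`-tensors `v` of projective weight 1 the trace-free part
of the covariant derivative, `v^i_{,j} − (1/n) v^s_{,s} δ^i_j`, is projectively invariant;
(2) for symmetric `(2,0)`-tensors `σ` of projective weight 2 the expression
`σ^{ij}_{,k} − (1/(n+1))(σ^{is}_{,s} δ^j_k + σ^{js}_{,s} δ^i_k)` is projectively invariant. -/
theorem statement_6 {n : ℕ} (hn : 2 ≤ n) (U : Set (Fin n → ℝ)) (hU : IsOpen U)
    (Γ Γ' : Christoffel n) (hTF : TorsionFree Γ) (hTF' : TorsionFree Γ')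
    (hsm : SmoothChristoffelOn U Γ) (hsm' : SmoothChristoffelOn U Γ')
    (hproj : ProjEquivOn U Γ Γ') :
    (∀ v : (Fin n → ℝ) → Fin n → ℝ, (∀ i, ContDiffOn ℝ ∞ (fun p => v p i) U) →
      ∀ p ∈ U, ∀ i j,
        covVec 1 Γ' v p i j - (1 / (n : ℝ)) * (∑ s, covVec 1 Γ' v p s s)
            * (if i = j then 1 else 0)
          = covVec 1 Γ v p i j - (1 / (n : ℝ)) * (∑ s, covVec 1 Γ v p s s)
            * (if i = j then 1 else 0)) ∧
    (∀ σ : (Fin n → ℝ) → Fin n → Fin n → ℝ,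
      (∀ i j, ContDiffOn ℝ ∞ (fun p => σ p i j) U) →
      (∀ p i j, σ p i j = σ p j i) →
      ∀ p ∈ U, ∀ i j k, mOp Γ' σ p i j k = mOp Γ σ p i j k) :=
  statement_6_general U hU Γ Γ' hTF hTF' hsm hproj

end ProjGeo
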